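/- There exists X ∈ {0,1}^ω such that no integer-valued martingale from any fixed countable family succeeds on X, yet X fails the law of large numbers. (In particular, for the countable family of all recursive integer-valued martingales, there is an integer-valued random X not satisfying the law of large numbers.) -/

import Mathlib

open Filter

/-- The initial segment of length `n` of an infinite binary sequence. -/
def seg (X : ℕ → Bool) (n : ℕ) : List Bool := List.ofFn (fun i : Fin n => X i)

/-- The martingale fairness condition. -/
def fairM (M : List Bool → ℝ) : Prop :=
  ∀ σ : List Bool, M σ = (M (σ ++ [false]) + M (σ ++ [true])) / 2

/-- `M` succeeds on `X`: `limsup_n M(X↾n) = ∞`. -/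
def mSucceeds (M : List Bool → ℝ) (X : ℕ → Bool) : Prop :=
  ∀ C : ℝ, ∃ n : ℕ, C < M (seg X n)

/-- `X` satisfies the law of large numbers. -/
def lawOfLargeNumbers (X : ℕ → Bool) : Prop :=
  Tendsto (fun n : ℕ =>
      (((Finset.range n).filter (fun i => X i = true)).card : ℝ) / n)
    atTop (nhds (1 / 2))

/-! An integer-valued martingale `M` attains its least value on the cone above any string `σ`
at some extension `τ`; fairness then forces `M` to be constant above `τ`, so a single finite
extension defeats `M`. Alternating such extensions (one for each martingale of the family) with
long blocks of zeros yields a sequence defeating the whole family whose density of ones drops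
below `1/3` infinitely often. -/

section Martingale

variable {M : List Bool → ℝ}

lemma fairM.forall_append_eq_of_le (hM : fairM M) {τ : List Bool}
    (hmin : ∀ ξ, M τ ≤ M (τ ++ ξ)) (ξ : List Bool) : M (τ ++ ξ) = M τ := by
  induction ξ generalizing τ with
  | nil => simp
  | cons b ξ ih =>
    have h0 := hmin [false]
    have h1 := hmin [true]
    -- both children are at least `M τ` and average to `M τ`
    have hb : M (τ ++ [b]) = M τ := by
      have := hM τ
      cases b <;> linarith
    have hminb : ∀ ζ, M (τ ++ [b]) ≤ M (τ ++ [b] ++ ζ) := fun ζ => by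
      rw [hb, List.append_assoc]; exact hmin _
    rw [← List.singleton_append, ← List.append_assoc, ih hminb, hb]

lemma exists_le_append_of_natValued (hnat : ∀ σ, ∃ k : ℕ, M σ = k) (σ : List Bool) :
    ∃ η, ∀ ξ, M (σ ++ η) ≤ M (σ ++ η ++ ξ) := by
  classical
  have hval : ∃ k : ℕ, ∃ η, M (σ ++ η) = k := ⟨_, [], by simpa using (hnat σ).choose_spec⟩
  obtain ⟨η, hη⟩ := Nat.find_spec hval
  refine ⟨η, fun ξ => ?_⟩
  obtain ⟨k, hk⟩ := hnat (σ ++ η ++ ξ)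
  rw [hη, hk, Nat.cast_le]
  exact Nat.find_min' hval ⟨η ++ ξ, by rw [← List.append_assoc, hk]⟩

lemma fairM.exists_forall_append_eq (hM : fairM M) (hnat : ∀ σ, ∃ k : ℕ, M σ = k)
    (σ : List Bool) : ∃ η, ∀ ξ, M (σ ++ η ++ ξ) = M (σ ++ η) :=
  (exists_le_append_of_natValued hnat σ).imp fun _ => hM.forall_append_eq_of_le

end Martingale

section Segments

variable {X : ℕ → Bool}

@[simp]
lemma length_seg (X : ℕ → Bool) (n : ℕ) : (seg X n).length = n := by
  simp [seg]

@[simp]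
lemma getElem_seg (n i : ℕ) (hi : i < (seg X n).length) : (seg X n)[i] = X i := by
  simp [seg]

lemma seg_prefix_seg {m n : ℕ} (hmn : m ≤ n) : seg X m <+: seg X n :=
  List.prefix_iff_getElem.2 ⟨by simpa using hmn, fun i _ => by simp⟩

lemma seg_length_eq_of_prefix {τ : List Bool} {n : ℕ} (h : τ <+: seg X n) :
    seg X τ.length = τ := by
  have hlen : τ.length ≤ n := by simpa using h.length_le
  apply List.ext_getElem (by simp)
  intro i _ hi
  simp [h.getElem hi]

lemma not_mSucceeds_of_forall_append_eq {M : List Bool → ℝ} {L : ℕ}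
    (hconst : ∀ ξ, M (seg X L ++ ξ) = M (seg X L)) : ¬ mSucceeds M X := by
  have hev : ∀ᶠ n in atTop, M (seg X L) = M (seg X n) := by
    filter_upwards [eventually_ge_atTop L] with n hn
    obtain ⟨ξ, hξ⟩ := seg_prefix_seg (X := X) hn
    rw [← hξ, hconst]
  obtain ⟨C, hC⟩ := (tendsto_const_nhds.congr' hev).bddAbove_range
  intro hsucc
  obtain ⟨n, hn⟩ := hsucc C
  exact hn.not_ge (hC ⟨n, rfl⟩)

end Segments

section LawOfLargeNumbers

lemma card_filter_range_le_of_false {X : ℕ → Bool} {ℓ n : ℕ}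
    (hfalse : ∀ i ∈ Finset.Ico ℓ n, X i = false) :
    ((Finset.range n).filter (fun i => X i = true)).card ≤ ℓ := by
  calc ((Finset.range n).filter (fun i => X i = true)).card
      ≤ (Finset.range ℓ).card := Finset.card_le_card fun i hi => by
        simp only [Finset.mem_filter, Finset.mem_range] at hi ⊢
        by_contra! h
        simp [hfalse i (Finset.mem_Ico.2 ⟨h, hi.1⟩)] at hi
    _ = ℓ := Finset.card_range ℓ

lemma not_lawOfLargeNumbers_of_frequently_false {X : ℕ → Bool}
    (hfreq : ∃ᶠ ℓ in atTop, ∀ i ∈ Finset.Ico ℓ (4 * ℓ + 1), X i = false) :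
    ¬ lawOfLargeNumbers X := by
  intro hlln
  have hdense : ∀ᶠ n : ℕ in atTop,
      (1 / 3 : ℝ) < (((Finset.range n).filter (fun i => X i = true)).card : ℝ) / n :=
    hlln.eventually (eventually_gt_nhds (by norm_num))
  have hlin : Tendsto (fun ℓ : ℕ => 4 * ℓ + 1) atTop atTop :=
    tendsto_atTop_mono (fun ℓ => (by omega : ℓ ≤ 4 * ℓ + 1)) tendsto_id
  obtain ⟨ℓ, hfalse, hgt⟩ := (hfreq.and_eventually (hlin.eventually hdense)).exists
  have hcard : (((Finset.range (4 * ℓ + 1)).filter (fun i => X i = true)).card : ℝ) ≤ ℓ :=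
    mod_cast card_filter_range_le_of_false hfalse
  rw [lt_div_iff₀ (by positivity)] at hgt
  push_cast at hgt
  linarith

end LawOfLargeNumbers

section Construction

def padZeros (σ : List Bool) : List Bool := σ ++ List.replicate (3 * σ.length + 1) false

def stage (η : ℕ → List Bool → List Bool) : ℕ → List Bool
  | 0 => []
  | i + 1 => padZeros (stage η i) ++ η i (padZeros (stage η i))

def limitSeq (σ : ℕ → List Bool) (n : ℕ) : Bool := (σ (n + 1)).getD n false

lemma seg_limitSeq {σ : ℕ → List Bool} (hσ : ∀ i, σ i <+: σ (i + 1))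
    (hlen : ∀ i, i < (σ (i + 1)).length) (i : ℕ) : seg (limitSeq σ) (σ i).length = σ i := by
  have hchain : ∀ ⦃a b⦄, a ≤ b → σ a <+: σ b := Nat.rel_of_forall_rel_succ_of_le _ hσ
  have hagree : ∀ a b j (ha : j < (σ a).length) (hb : j < (σ b).length),
      (σ a)[j] = (σ b)[j] := by
    intro a b j ha hb
    rcases le_total a b with hab | hba
    · exact (hchain hab).getElem ha
    · exact ((hchain hba).getElem hb).symm
  apply List.ext_getElem (by simp)
  intro j _ hj
  simp only [getElem_seg, limitSeq, List.getD_eq_getElem _ _ (hlen j)]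
  exact hagree (j + 1) i j (hlen j) hj

variable {η : ℕ → List Bool → List Bool}

lemma padZeros_prefix_stage_succ (i : ℕ) : padZeros (stage η i) <+: stage η (i + 1) :=
  List.prefix_append _ _

lemma stage_prefix_stage_succ (i : ℕ) : stage η i <+: stage η (i + 1) :=
  (List.prefix_append _ _).trans (padZeros_prefix_stage_succ i)

lemma le_length_stage (i : ℕ) : i ≤ (stage η i).length := by
  induction i with
  | zero => simp
  | succ i ih => simp only [stage, padZeros, List.length_append, List.length_replicate]; omega

lemma seg_limitSeq_stage (i : ℕ) :
    seg (limitSeq (stage η)) (stage η i).length = stage η i :=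
  seg_limitSeq stage_prefix_stage_succ (fun i => le_length_stage (i + 1)) i

lemma limitSeq_stage_eq_false (i : ℕ) :
    ∀ j ∈ Finset.Ico (stage η i).length (4 * (stage η i).length + 1),
      limitSeq (stage η) j = false := by
  intro j hj
  have hpad : seg (limitSeq (stage η)) (padZeros (stage η i)).length = padZeros (stage η i) :=
    seg_length_eq_of_prefix (by rw [seg_limitSeq_stage]; exact padZeros_prefix_stage_succ i)
  rw [Finset.mem_Ico] at hj
  have hjpad : j < (padZeros (stage η i)).length := by simp [padZeros]; omega
  calc limitSeq (stage η) j
      = (seg (limitSeq (stage η)) (padZeros (stage η i)).length)[j]'(by simpa using hjpad) :=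
        (getElem_seg _ _ _).symm
    _ = (padZeros (stage η i))[j] := List.getElem_of_eq hpad _
    _ = false := by simp [padZeros, List.getElem_append_right hj.1]

end Construction

theorem stmt5_general (F : ℕ → (List Bool → ℝ))
    (hfair : ∀ i, fairM (F i))
    (hint : ∀ i σ, ∃ k : ℕ, F i σ = k) :
    ∃ X : ℕ → Bool, (∀ i, ¬ mSucceeds (F i) X) ∧ ¬ lawOfLargeNumbers X := by
  choose η hη using fun i => (hfair i).exists_forall_append_eq (hint i)
  refine ⟨limitSeq (stage η), fun i => ?_, not_lawOfLargeNumbers_of_frequently_false ?_⟩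
  · apply not_mSucceeds_of_forall_append_eq (L := (stage η (i + 1)).length)
    rw [seg_limitSeq_stage]
    exact hη i _
  · exact frequently_atTop.2 fun N =>
      ⟨(stage η N).length, le_length_stage N, limitSeq_stage_eq_false N⟩

/-- For any countable family of integer-valued martingales (e.g. the recursive
ones) there is a sequence `X` defeating all of them which fails the law of
large numbers. -/
theorem stmt5 (F : ℕ → (List Bool → ℝ))
    (hfair : ∀ i, fairM (F i)) (hnonneg : ∀ i σ, 0 ≤ F i σ)
    (hint : ∀ i σ, ∃ k : ℕ, F i σ = k) :
    ∃ X : ℕ → Bool, (∀ i, ¬ mSucceeds (F i) X) ∧ ¬ lawOfLargeNumbers X :=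
  stmt5_general F hfair hint
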